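/- Let u = (u_1,…,u_m) ∈ [0,1]^m with m ≥ 1 (not necessarily sorted), and let k_1,…,k_l ∈ {1,…,m} be distinct indices satisfying Σ_{i=1}^{l} u_{k_i} ≤ αl. Then H_o([u]) ≼ [(u_{k_1},…,u_{k_l})]. -/

import Mathlib

open scoped BigOperators

/-- The partial order `≼` (on lists): `u ≼ v` iff `dim u ≥ dim v` and
`u_i ≤ v_i` for every `i < dim v`. -/
def preceqL (a b : List ℝ) : Prop :=
  b.length ≤ a.length ∧ ∀ i < b.length, a.getD i 0 ≤ b.getD i 0

/-- `I_o(u) = max { n ∈ {0,…,dim u} : Σ_{i=1}^n u_i ≤ α n }` (the empty sum is `0`). -/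
noncomputable def Io (α : ℝ) (l : List ℝ) : ℕ :=
  ((Finset.range (l.length + 1)).filter
    fun n => (∑ i ∈ Finset.range n, l.getD i 0) ≤ α * n).max' ⟨0, by simp⟩

/-- `H_o(u) = (u_1,…,u_{I_o(u)})`, the empty tuple if `I_o(u) = 0`. -/
noncomputable def Ho (α : ℝ) (l : List ℝ) : List ℝ :=
  l.take (Io α l)

/-- `[·]`: the nondecreasing rearrangement (order statistic) of a finite tuple. -/
noncomputable def sortR (l : List ℝ) : List ℝ :=
  l.insertionSort (· ≤ ·)

/-!
The sorted tuple `[(u_{k_1},…,u_{k_l})]` is a sublist of the sorted tuple `[u]`, and a sorted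
list is entrywise below each of its sublists: `[u]_i ≤ [(u_{k_1},…,u_{k_l})]_i` for `i ≤ l`.
Summing, the first `l` entries of `[u]` have sum at most `Σ u_{k_i} ≤ α l`, so `I_o([u]) ≥ l`,
and the truncation `H_o([u])` still contains these `l` entries.
-/
theorem List.sum_eq_sum_range_getD (L : List ℝ) :
    L.sum = ∑ i ∈ Finset.range L.length, L.getD i 0 := by
  induction L with
  | nil => simp
  | cons a t ih => simp [Finset.sum_range_succ', ih, add_comm]

theorem List.Sublist.getElem_le_getElem_of_pairwise {α : Type*} [Preorder α] {s v : List α}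
    (h : List.Sublist v s) (hs : s.Pairwise (· ≤ ·)) (i : ℕ) (hi : i < v.length) :
    s[i]'(hi.trans_le h.length_le) ≤ v[i] := by
  induction h generalizing i with
  | slnil => simp at hi
  | @cons v s a h ih =>
    have hs' := List.pairwise_cons.mp hs
    have hi' : i < s.length := hi.trans_le h.length_le
    calc (a :: s)[i]'(Nat.lt_succ_of_lt hi') ≤ s[i] := by
          cases i with
          | zero => exact hs'.1 _ (List.getElem_mem _)
          | succ j => exact List.pairwise_iff_getElem.mp hs'.2 _ _ _ _ j.lt_succ_self
      _ ≤ v[i] := ih hs'.2 i hi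
  | @cons_cons v s a h ih =>
    cases i with
    | zero => exact le_rfl
    | succ j => exact ih (List.pairwise_cons.mp hs).2 j (Nat.lt_of_succ_lt_succ hi)

theorem preceqL_of_sublist {s v : List ℝ} (h : List.Sublist v s) (hs : s.Pairwise (· ≤ ·)) :
    preceqL s v := by
  refine ⟨h.length_le, fun i hi => ?_⟩
  rw [List.getD_eq_getElem _ _ hi, List.getD_eq_getElem _ _ (hi.trans_le h.length_le)]
  exact h.getElem_le_getElem_of_pairwise hs i hi

theorem preceqL.take {s v : List ℝ} (h : preceqL s v) {n : ℕ} (hn : v.length ≤ n) :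
    preceqL (s.take n) v := by
  refine ⟨by simpa using ⟨hn, h.1⟩, fun i hi => ?_⟩
  rw [List.getD_eq_getElem?_getD, List.getElem?_take_of_lt (hi.trans_le hn),
    ← List.getD_eq_getElem?_getD]
  exact h.2 i hi

theorem preceqL.sum_range_getD_le {s v : List ℝ} (h : preceqL s v) :
    ∑ i ∈ Finset.range v.length, s.getD i 0 ≤ v.sum := by
  rw [v.sum_eq_sum_range_getD]
  exact Finset.sum_le_sum fun i hi => h.2 i (Finset.mem_range.mp hi)

theorem le_Io_of_sum_le {α : ℝ} {s : List ℝ} {n : ℕ} (hn : n ≤ s.length)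
    (hsum : ∑ i ∈ Finset.range n, s.getD i 0 ≤ α * n) : n ≤ Io α s :=
  Finset.le_max' _ _ (Finset.mem_filter.mpr ⟨Finset.mem_range_succ_iff.mpr hn, hsum⟩)

theorem sortR_perm (l : List ℝ) : (sortR l).Perm l := List.perm_insertionSort _ _

theorem sortR_pairwise (l : List ℝ) : (sortR l).Pairwise (· ≤ ·) :=
  List.pairwise_insertionSort _ _

theorem sortR_sublist_of_subperm {l₁ l₂ : List ℝ} (h : List.Subperm l₁ l₂) :
    List.Sublist (sortR l₁) (sortR l₂) :=
  List.sublist_of_subperm_of_pairwise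
    (((sortR_perm l₁).subperm.trans h).trans (sortR_perm l₂).symm.subperm)
    (sortR_pairwise l₁) (sortR_pairwise l₂)

theorem List.ofFn_comp_subperm {α : Type*} {m l : ℕ} (u : Fin m → α) {k : Fin l → Fin m}
    (hk : Function.Injective k) : List.Subperm (List.ofFn (u ∘ k)) (List.ofFn u) := by
  obtain ⟨w, hw, hsub⟩ : List.Subperm (List.ofFn k) (List.finRange m) :=
    List.subperm_of_subset (List.nodup_ofFn.mpr hk) fun x _ => List.mem_finRange x
  rw [← List.map_ofFn, List.ofFn_eq_map (f := u)]
  exact ⟨w.map u, hw.map u, hsub.map u⟩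

theorem stmt_4_general (α : ℝ) (m l : ℕ)
    (u : Fin m → ℝ)
    (k : Fin l → Fin m) (hk : Function.Injective k)
    (hsum : (∑ i, u (k i)) ≤ α * l) :
    preceqL (Ho α (sortR (List.ofFn u))) (sortR (List.ofFn (u ∘ k))) := by
  set s := sortR (List.ofFn u)
  set v := sortR (List.ofFn (u ∘ k))
  have hv : v.length = l := by simp [v, sortR]
  have hvs : preceqL s v :=
    preceqL_of_sublist (sortR_sublist_of_subperm (List.ofFn_comp_subperm u hk)) (sortR_pairwise _)
  have hvsum : v.sum = ∑ i, u (k i) := by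
    rw [(sortR_perm _).sum_eq, List.sum_ofFn, Function.comp_def]
  refine hvs.take (le_Io_of_sum_le hvs.1 ?_)
  calc ∑ i ∈ Finset.range v.length, s.getD i 0 ≤ v.sum := hvs.sum_range_getD_le
    _ ≤ α * v.length := by rw [hvsum, hv]; exact hsum

/-- Let `u = (u_1,…,u_m) ∈ [0,1]^m` with `m ≥ 1` and let `k_1,…,k_l ∈ {1,…,m}` be distinct
indices with `Σ_{i=1}^l u_{k_i} ≤ α l`.  Then `H_o([u]) ≼ [(u_{k_1},…,u_{k_l})]`. -/
theorem stmt_4 (α : ℝ) (hα : α ∈ Set.Ioc (0 : ℝ) 1) (m l : ℕ) (hm : 1 ≤ m)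
    (u : Fin m → ℝ) (hu : ∀ i, u i ∈ Set.Icc (0 : ℝ) 1)
    (k : Fin l → Fin m) (hk : Function.Injective k)
    (hsum : (∑ i, u (k i)) ≤ α * l) :
    preceqL (Ho α (sortR (List.ofFn u))) (sortR (List.ofFn (u ∘ k))) :=
  stmt_4_general α m l u k hk hsum
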